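/- Let q = p^r > 3 with p an odd prime, let t(x) = x + ∑_{k=0}^{q-2} x^k ∈ F_q[x], let f_2(x_1,x_2) be the reduced form of t(x_1^{q-2} + x_2^{q-2}), and let f_3(x_1,x_2,x_3) be the reduced form of t(f_2^{q-2} + x_3^{q-2}). Then f_3 has total degree 3(q-2) (and is a local permutation polynomial of maximum degree); moreover its unique monomial of degree 3(q-2) is −4·x_1^{q-2} x_2^{q-2} x_3^{q-2}. -/

import Mathlib

/-!
Write `T` for the transposition of `0` and `1` and `a⁻¹` for `a ^ (q - 2)` (so `0⁻¹ = 0`); then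
`f₃` induces `(a, b, c) ↦ T (T (a⁻¹ + b⁻¹)⁻¹ + c⁻¹)`, a bijection in each variable separately.
For a reduced polynomial, the coefficient of `x^d` is the sum over `F^n` of the function times
`∏ w_{d_i}(x_i)`, where `w_m(a) = [m = 0] - a^(q-1-m)` is dual to the monomials `a^k`, `k < q`.
Since `w_{q-1} = -1`, the coefficient of an `x^d` with `d_i = q - 1` splits into sums of a
permutation of `F` along the lines in direction `i`, each of which is `∑ F = 0`; so every exponent
of `f₃` is at most `q - 2`. It remains to see that the coefficient of `(x₁x₂x₃)^(q-2)`, which is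
`-∑ T(T(a⁻¹ + b⁻¹)⁻¹ + c⁻¹) abc`, equals `-4`. The sum over `c` is
`-1 - T(A) - (1 - T(A)⁻¹)⁻¹` with `A = a⁻¹ + b⁻¹`; inverting `a, b` and using
`∑ₐ a⁻¹ (u - a)⁻¹ = -2u⁻²` reduces everything to `∑ᵤ u⁻¹ (u - 1)⁻¹ = 2`.
-/

open Finset MvPolynomial

theorem Nat.ne_zero_and_dvd_iff_of_le_two_mul {n s : ℕ} (hn : 0 < n) (hs : s ≤ 2 * n) :
    (s ≠ 0 ∧ n ∣ s) ↔ s = n ∨ s = 2 * n := by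
  constructor
  · rintro ⟨hs0, c, rfl⟩
    have hc : c ≤ 2 := Nat.le_of_mul_le_mul_left (by linarith) hn
    interval_cases c <;> simp_all [mul_comm]
  · rintro (rfl | rfl) <;> simp [hn.ne']

theorem Equiv.swap_zero_one_apply {R : Type*} [NonAssocRing R] [Nontrivial R] [DecidableEq R]
    (y : R) :
    Equiv.swap (0 : R) 1 y = y + (if y = 0 then 1 else 0) - (if y = 1 then 1 else 0) := by
  rcases eq_or_ne y 0 with rfl | h0
  · simp
  rcases eq_or_ne y 1 with rfl | h1
  · simp
  simp [Equiv.swap_apply_of_ne_of_ne h0 h1, h0, h1]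

theorem Fintype.sum_eq_zero_of_sum_update_eq_zero {ι β M : Type*} [DecidableEq ι] [Fintype ι]
    [Fintype β] [AddCommMonoid M] {h : (ι → β) → M} (i : ι)
    (H : ∀ x, ∑ c, h (Function.update x i c) = 0) : ∑ x, h x = 0 := by
  rw [← (Equiv.funSplitAt i β).symm.sum_comp, Fintype.sum_prod_type_right]
  refine Finset.sum_eq_zero fun y _ => ?_
  cases isEmpty_or_nonempty β with
  | inl _ => simp
  | inr hβ =>
    obtain ⟨c₀⟩ := hβ
    refine (sum_congr _ _ fun c => congrArg h ?_).trans (H ((Equiv.funSplitAt i β).symm (c₀, y)))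
    ext j
    by_cases hj : j = i
    · subst hj; simp
    · simp [hj]

theorem Fin.sum_univ_three_fun {α M : Type*} [Fintype α] [AddCommMonoid M]
    (f : (Fin 3 → α) → M) : ∑ x, f x = ∑ a, ∑ b, ∑ c, f ![a, b, c] := by
  simp only [← (Fin.consEquiv fun _ => α).sum_comp, Fintype.sum_prod_type, Fintype.sum_unique]
  refine sum_congr rfl fun a _ => sum_congr rfl fun b _ => sum_congr rfl fun c _ => congrArg f ?_
  ext i
  fin_cases i <;> rfl

namespace FiniteField

section PowerSums

variable {K : Type*} [Field K] [Fintype K]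

theorem sum_pow (i : ℕ) :
    ∑ x : K, x ^ i = if i ≠ 0 ∧ Fintype.card K - 1 ∣ i then -1 else 0 := by
  classical
  rcases eq_or_ne i 0 with rfl | hi
  · simp
  have hunits : ∑ x : Kˣ, (x : K) ^ i = ∑ x : {x : K // x ≠ 0}, (x : K) ^ i :=
    (unitsEquivNeZero (G₀ := K)).sum_comp fun x => (x : K) ^ i
  have hzero : ∑ x : {x : K // ¬x ≠ 0}, (x : K) ^ i = 0 :=
    Fintype.sum_eq_zero _ fun x => by rw [not_not.mp x.2, zero_pow hi]
  rw [← Fintype.sum_subtype_add_sum_subtype (· ≠ 0), ← hunits, sum_pow_units K i]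
  simp [hi, hzero]

theorem sum_id_eq_zero (hK : 2 < Fintype.card K) : ∑ a : K, a = 0 := by
  simpa using sum_pow_lt_card_sub_one K 1 (by omega)

theorem sum_inv_pow {k : ℕ} (hk : k < Fintype.card K - 1) : ∑ a : K, a⁻¹ ^ k = 0 :=
  (inv_involutive.bijective.sum_comp (· ^ k)).trans (sum_pow_lt_card_sub_one K k hk)

theorem sum_inv_mul_self : ∑ a : K, a⁻¹ * a = -1 := by
  classical
  calc ∑ a : K, a⁻¹ * a = ∑ a : K, (1 - if a = 0 then 1 else 0) :=
        sum_congr rfl fun a _ => by rcases eq_or_ne a 0 with rfl | h <;> simp [*]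
    _ = -1 := by simp [sum_sub_distrib]

theorem pow_card_sub_two_eq_inv (hK : 2 < Fintype.card K) (a : K) :
    a ^ (Fintype.card K - 2) = a⁻¹ := by
  rcases eq_or_ne a 0 with rfl | ha
  · rw [zero_pow (by omega), inv_zero]
  refine eq_inv_of_mul_eq_one_left ?_
  rw [← pow_succ, show Fintype.card K - 2 + 1 = Fintype.card K - 1 by omega,
    pow_card_sub_one_eq_one a ha]

def monomialDual (m : ℕ) (a : K) : K :=
  (if m = 0 then 1 else 0) - a ^ (Fintype.card K - 1 - m)

theorem sum_pow_mul_monomialDual {k m : ℕ} (hk : k < Fintype.card K)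
    (hm : m < Fintype.card K) :
    ∑ a : K, a ^ k * monomialDual m a = if k = m then 1 else 0 := by
  have hq : 0 < Fintype.card K - 1 := by have := Fintype.one_lt_card (α := K); omega
  rw [show ∑ a : K, a ^ k * monomialDual m a = (if m = 0 then 1 else 0) * ∑ a : K, a ^ k
      - ∑ a : K, a ^ (k + (Fintype.card K - 1 - m)) by
    simp only [monomialDual, mul_sub, sum_sub_distrib, ← Finset.sum_mul, ← pow_add, mul_comm],
    sum_pow, sum_pow]
  simp only [Nat.ne_zero_and_dvd_iff_of_le_two_mul hq (by omega : k ≤ 2 * (Fintype.card K - 1)),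
    Nat.ne_zero_and_dvd_iff_of_le_two_mul hq
      (by omega : k + (Fintype.card K - 1 - m) ≤ 2 * (Fintype.card K - 1))]
  split_ifs <;> first | omega | simp

theorem monomialDual_card_sub_two (hK : 2 < Fintype.card K) (a : K) :
    monomialDual (Fintype.card K - 2) a = -a := by
  simp [monomialDual, show Fintype.card K - 2 ≠ 0 by omega,
    show Fintype.card K - 1 - (Fintype.card K - 2) = 1 by omega]

theorem sum_inv_mul_inv_sub_one (hK : 2 < Fintype.card K) :
    ∑ u : K, u⁻¹ * (u - 1)⁻¹ = 2 := by
  classical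
  have hinv : ∑ u : K, u⁻¹ = 0 := by simpa using sum_inv_pow (K := K) (k := 1) (by omega)
  have hshift : ∑ u : K, (u - 1)⁻¹ = 0 := ((Equiv.subRight 1).sum_comp (·⁻¹)).trans hinv
  have hpt : ∀ u : K, u⁻¹ * (u - 1)⁻¹ =
      (u - 1)⁻¹ - u⁻¹ + ((if u = 0 then 1 else 0) + (if u = 1 then 1 else 0)) := fun u => by
    rcases eq_or_ne u 0 with rfl | h0
    · simp
    rcases eq_or_ne u 1 with rfl | h1
    · simp
    have : u - 1 ≠ 0 := sub_ne_zero.mpr h1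
    field_simp
    simp [h0, h1]
  simp only [hpt, sum_add_distrib, sum_sub_distrib, hinv, hshift, sum_ite_eq', mem_univ, if_true]
  norm_num

theorem sum_inv_mul_inv_sub (hK : 3 < Fintype.card K) (u : K) :
    ∑ a : K, a⁻¹ * (u - a)⁻¹ = -2 * u⁻¹ ^ 2 := by
  rcases eq_or_ne u 0 with rfl | hu
  · have hsq := sum_inv_pow (K := K) (k := 2) (by omega)
    simp only [zero_sub, inv_neg, mul_neg, ← sq, sum_neg_distrib, hsq]
    simp
  refine ((mulLeft_bijective₀ u hu).sum_comp fun a => a⁻¹ * (u - a)⁻¹).symm.trans ?_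
  have hpt : ∀ s : K, (u * s)⁻¹ * (u - u * s)⁻¹ = -(u⁻¹ ^ 2 * (s⁻¹ * (s - 1)⁻¹)) := fun s => by
    rw [← mul_one_sub, mul_inv, mul_inv, ← neg_sub s 1, inv_neg]
    ring
  simp only [hpt, sum_neg_distrib, ← mul_sum, sum_inv_mul_inv_sub_one (K := K) (by omega)]
  ring

theorem sum_inv_mul_inv_mul_add (hK : 3 < Fintype.card K) (φ : K → K) :
    ∑ a : K, ∑ b : K, a⁻¹ * b⁻¹ * φ (a + b) = -2 * ∑ u : K, u⁻¹ ^ 2 * φ u := by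
  have hshift : ∀ a : K, ∑ b : K, a⁻¹ * b⁻¹ * φ (a + b) = ∑ u : K, a⁻¹ * (u - a)⁻¹ * φ u :=
    fun a => by
      rw [← (Equiv.subRight a).sum_comp]
      simp
  simp only [hshift]
  rw [sum_comm]
  simp only [← sum_mul, sum_inv_mul_inv_sub hK, mul_sum]
  exact sum_congr rfl fun u _ => by ring

theorem eval_X_add_sum_range_pow [DecidableEq K] (a : K) :
    (Polynomial.X + ∑ k ∈ range (Fintype.card K - 1), Polynomial.X ^ k).eval a =
      Equiv.swap 0 1 a := by
  have hq : 1 < Fintype.card K := Fintype.one_lt_card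
  simp only [Polynomial.eval_add, Polynomial.eval_X, Polynomial.eval_finsetSum,
    Polynomial.eval_pow]
  rcases eq_or_ne a 0 with rfl | h0
  · simp [zero_pow_eq, sum_ite_eq', show 0 < Fintype.card K - 1 by omega]
  rcases eq_or_ne a 1 with rfl | h1
  · simp [Nat.cast_sub hq.le]
  rw [geom_sum_eq h1, pow_card_sub_one_eq_one a h0, Equiv.swap_apply_of_ne_of_ne h0 h1]
  simp

end PowerSums

section SwapInvAdd

variable {K : Type*} [Field K] [DecidableEq K]

def swapInvAdd (u v : K) : K := Equiv.swap 0 1 (u⁻¹ + v⁻¹)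

theorem swapInvAdd_comm (u v : K) : swapInvAdd u v = swapInvAdd v u := by
  rw [swapInvAdd, swapInvAdd, add_comm]

theorem swapInvAdd_bijective (u : K) : Function.Bijective (swapInvAdd u) :=
  (Equiv.swap (0 : K) 1).bijective.comp
    ((Equiv.addLeft u⁻¹).bijective.comp inv_involutive.bijective)

theorem swapInvAdd_bijective_left (v : K) : Function.Bijective fun u => swapInvAdd u v := by
  simpa only [swapInvAdd_comm _ v] using swapInvAdd_bijective v

theorem bijective_update_swapInvAdd_swapInvAdd (i : Fin 3) (x : Fin 3 → K) :
    Function.Bijective fun c =>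
      swapInvAdd (swapInvAdd (Function.update x i c 0) (Function.update x i c 1))
        (Function.update x i c 2) := by
  fin_cases i <;> simp only [Fin.zero_eta, Fin.mk_one, Fin.reduceFinMk, Function.update_self,
    ne_eq, Fin.reduceEq, not_false_eq_true, Function.update_of_ne]
  · exact (swapInvAdd_bijective_left _).comp (swapInvAdd_bijective_left _)
  · exact (swapInvAdd_bijective_left _).comp (swapInvAdd_bijective _)
  · exact swapInvAdd_bijective _

variable [Fintype K]

theorem sum_swapInvAdd_mul (hK : 2 < Fintype.card K) (u : K) :
    ∑ c : K, swapInvAdd u c * c = -1 - u - (1 - u⁻¹)⁻¹ := by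
  have h0 : ∀ c : K, u⁻¹ + c⁻¹ = 0 ↔ c = -u := fun c => by
    rw [add_eq_zero_iff_eq_neg', inv_eq_iff_eq_inv, inv_neg, inv_inv]
  have h1 : ∀ c : K, u⁻¹ + c⁻¹ = 1 ↔ c = (1 - u⁻¹)⁻¹ := fun c => by
    rw [← eq_sub_iff_add_eq', inv_eq_iff_eq_inv]
  simp only [swapInvAdd, Equiv.swap_zero_one_apply, h0, h1, add_mul, sub_mul, ite_mul, one_mul,
    zero_mul, sum_add_distrib, sum_sub_distrib, sum_ite_eq', mem_univ, if_true,
    sum_inv_mul_self]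
  rw [← mul_sum, sum_id_eq_zero hK]
  ring

theorem sum_swapInvAdd_swapInvAdd_mul (hK : 3 < Fintype.card K) :
    ∑ a : K, ∑ b : K, ∑ c : K, swapInvAdd (swapInvAdd a b) c * (a * b * c) = 4 := by
  set ψ : K → K := fun u => -1 - Equiv.swap 0 1 u - (1 - (Equiv.swap 0 1 u)⁻¹)⁻¹
  have hinv : ∀ g : K → K, ∑ a, g a⁻¹ = ∑ a, g a := inv_involutive.bijective.sum_comp
  have hψ : ∀ u : K, u⁻¹ ^ 2 * ψ u = -u⁻¹ ^ 2 - u⁻¹ - u⁻¹ * (u - 1)⁻¹ := fun u => by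
    rcases eq_or_ne u 0 with rfl | h0
    · simp
    rcases eq_or_ne u 1 with rfl | h1
    · norm_num [ψ]
    have : u - 1 ≠ 0 := sub_ne_zero.mpr h1
    simp only [ψ, Equiv.swap_apply_of_ne_of_ne h0 h1]
    field_simp
  calc ∑ a : K, ∑ b : K, ∑ c : K, swapInvAdd (swapInvAdd a b) c * (a * b * c)
      = ∑ a : K, ∑ b : K, a * b * ψ (a⁻¹ + b⁻¹) := by
        refine sum_congr rfl fun a _ => sum_congr rfl fun b _ => ?_
        simp_rw [mul_left_comm _ (a * b), ← mul_sum]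
        rw [sum_swapInvAdd_mul (by omega)]
        rfl
    _ = ∑ a : K, ∑ b : K, a⁻¹ * b⁻¹ * ψ (a + b) := by
        rw [← hinv fun a => ∑ b, a⁻¹ * b⁻¹ * ψ (a + b)]
        refine sum_congr rfl fun a _ => ?_
        rw [← hinv fun b => a⁻¹⁻¹ * b⁻¹ * ψ (a⁻¹ + b)]
        simp only [inv_inv]
    _ = -2 * ∑ u : K, (-u⁻¹ ^ 2 - u⁻¹ - u⁻¹ * (u - 1)⁻¹) := by
        rw [sum_inv_mul_inv_mul_add hK]
        simp only [hψ]
    _ = 4 := by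
        have hsq := sum_inv_pow (K := K) (k := 2) (by omega)
        have h1 := sum_inv_pow (K := K) (k := 1) (by omega)
        simp only [pow_one] at h1
        rw [sum_sub_distrib, sum_sub_distrib, sum_neg_distrib, hsq, h1,
          sum_inv_mul_inv_sub_one (by omega)]
        norm_num

end SwapInvAdd

end FiniteField

namespace MvPolynomial

open FiniteField

section ReducedForm

variable {K σ : Type*} [Field K] [Fintype K] [Fintype σ] [DecidableEq σ]

theorem coeff_eq_sum_eval_mul_prod_monomialDual {f : MvPolynomial σ K}
    (hf : ∀ i, f.degreeOf i < Fintype.card K) {d : σ →₀ ℕ} (hd : ∀ i, d i < Fintype.card K) :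
    f.coeff d = ∑ x : σ → K, eval x f * ∏ i, monomialDual (d i) (x i) := by
  classical
  have hsupp : ∀ m ∈ f.support, ∀ i, m i < Fintype.card K := fun m hm i =>
    (degreeOf_lt_iff Fintype.card_pos).mp (hf i) m hm
  calc f.coeff d = ∑ m ∈ f.support, f.coeff m * ∏ i, (if m i = d i then 1 else 0) := by
        simp only [prod_boole, mem_univ, true_implies, ← DFunLike.ext_iff, mul_ite, mul_one,
          mul_zero, sum_ite_eq', mem_support_iff, ite_not]
        split_ifs with h <;> simp [h]
    _ = ∑ m ∈ f.support, f.coeff m * ∏ i, ∑ a : K, a ^ m i * monomialDual (d i) a := by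
        refine sum_congr rfl fun m hm => ?_
        simp only [sum_pow_mul_monomialDual (hsupp m hm _) (hd _)]
    _ = ∑ x : σ → K, eval x f * ∏ i, monomialDual (d i) (x i) := by
        simp only [eval_eq', sum_mul]
        rw [sum_comm]
        refine sum_congr rfl fun m _ => ?_
        rw [Fintype.prod_sum, mul_sum]
        refine sum_congr rfl fun x _ => ?_
        rw [mul_assoc, ← prod_mul_distrib]

theorem coeff_eq_zero_of_bijective_update (hK : 2 < Fintype.card K) {f : MvPolynomial σ K}
    (hf : ∀ i, f.degreeOf i < Fintype.card K) {i : σ}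
    (hperm : ∀ x, Function.Bijective fun c => eval (Function.update x i c) f)
    {d : σ →₀ ℕ} (hd : d i = Fintype.card K - 1) : f.coeff d = 0 := by
  by_cases hdq : ∀ j, d j < Fintype.card K
  · rw [coeff_eq_sum_eval_mul_prod_monomialDual hf hdq]
    refine Fintype.sum_eq_zero_of_sum_update_eq_zero i fun x => ?_
    have hdual : ∀ c, ∏ j, monomialDual (d j) (Function.update x i c j) =
        -∏ j ∈ univ.erase i, monomialDual (d j) (x j) := fun c => by
      have hconst : monomialDual (d i) c = -1 := by
        simp [monomialDual, hd, show Fintype.card K - 1 ≠ 0 by omega]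
      rw [← mul_prod_erase univ _ (mem_univ i), Function.update_self, hconst, neg_one_mul]
      exact congrArg _ (prod_congr rfl fun j hj => by
        rw [Function.update_of_ne (ne_of_mem_erase hj)])
    have hsum : ∑ c, eval (Function.update x i c) f = 0 :=
      ((hperm x).sum_comp id).trans (sum_id_eq_zero hK)
    simp only [hdual, ← sum_mul, hsum, zero_mul]
  · push Not at hdq
    obtain ⟨j, hj⟩ := hdq
    exact notMem_support_iff.mp fun hm =>
      ((degreeOf_lt_iff Fintype.card_pos).mp (hf j) d hm).not_ge hj

theorem degreeOf_le_card_sub_two_of_bijective_update (hK : 2 < Fintype.card K)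
    {f : MvPolynomial σ K} (hf : ∀ i, f.degreeOf i < Fintype.card K) {i : σ}
    (hperm : ∀ x, Function.Bijective fun c => eval (Function.update x i c) f) :
    f.degreeOf i ≤ Fintype.card K - 2 :=
  degreeOf_le_iff.mpr fun m hm => by
    have hlt := (degreeOf_lt_iff Fintype.card_pos).mp (hf i) m hm
    have hne : m i ≠ Fintype.card K - 1 := fun h =>
      mem_support_iff.mp hm (coeff_eq_zero_of_bijective_update hK hf hperm h)
    omega

end ReducedForm

section Box

variable {R σ : Type*} [CommSemiring R] [Fintype σ] {f : MvPolynomial σ R} {n : ℕ}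

theorem eq_const_of_degreeOf_le (h : ∀ i, f.degreeOf i ≤ n) {d : σ →₀ ℕ} (hd : d ∈ f.support)
    (hsum : Fintype.card σ * n ≤ d.sum fun _ e => e) :
    d = Finsupp.equivFunOnFinite.symm fun _ => n := by
  have hle : ∀ i ∈ univ, d i ≤ n := fun i _ => degreeOf_le_iff.mp (h i) d hd
  rw [Finsupp.sum_fintype _ _ fun _ => rfl] at hsum
  have heq := (sum_eq_sum_iff_of_le hle).mp
    (le_antisymm (sum_le_sum hle) (by simpa using hsum))
  ext i
  exact heq i (mem_univ i)

theorem totalDegree_eq_card_mul_of_degreeOf_le (h : ∀ i, f.degreeOf i ≤ n)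
    (hD : f.coeff (Finsupp.equivFunOnFinite.symm fun _ => n) ≠ 0) :
    f.totalDegree = Fintype.card σ * n := by
  refine le_antisymm (Finset.sup_le fun d hd => ?_) ?_
  · rw [Finsupp.sum_fintype _ _ fun _ => rfl]
    simpa using sum_le_sum fun i (_ : i ∈ univ) => degreeOf_le_iff.mp (h i) d hd
  · simpa [Finsupp.sum_fintype] using le_totalDegree (mem_support_iff.mpr hD)

theorem coeff_eq_zero_of_degreeOf_le (h : ∀ i, f.degreeOf i ≤ n) {d : σ →₀ ℕ}
    (hsum : (d.sum fun _ e => e) = Fintype.card σ * n)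
    (hne : d ≠ Finsupp.equivFunOnFinite.symm fun _ => n) : f.coeff d = 0 :=
  notMem_support_iff.mp fun hd => hne (eq_const_of_degreeOf_le h hd hsum.ge)

end Box

end MvPolynomial

open FiniteField

theorem lpp_three_vars_max_degree_general {p r : ℕ} (hp : p.Prime) (hodd : p ≠ 2)
    {F : Type*} [Field F] [Fintype F] [DecidableEq F]
    (hF : Fintype.card F = p ^ r) (hq : 3 < Fintype.card F)
    (t : Polynomial F)
    (ht : t = Polynomial.X + ∑ k ∈ Finset.range (Fintype.card F - 1), Polynomial.X ^ k)
    (f₂ : MvPolynomial (Fin 2) F)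
    (heq₂ : ∀ x : Fin 2 → F, eval x f₂ =
      Polynomial.eval ((x 0) ^ (Fintype.card F - 2) + (x 1) ^ (Fintype.card F - 2)) t)
    (f₃ : MvPolynomial (Fin 3) F)
    (hred₃ : ∀ i : Fin 3, f₃.degreeOf i < Fintype.card F)
    (heq₃ : ∀ x : Fin 3 → F, eval x f₃ =
      Polynomial.eval ((eval ![x 0, x 1] f₂) ^ (Fintype.card F - 2)
        + (x 2) ^ (Fintype.card F - 2)) t) :
    f₃.totalDegree = 3 * (Fintype.card F - 2) ∧
    (∀ (i : Fin 3) (x : Fin 3 → F),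
      Function.Bijective fun c : F => eval (Function.update x i c) f₃) ∧
    f₃.coeff (Finsupp.equivFunOnFinite.symm fun _ : Fin 3 => Fintype.card F - 2) = -4 ∧
    (∀ d : Fin 3 →₀ ℕ, (d.sum fun _ e => e) = 3 * (Fintype.card F - 2) →
      d ≠ Finsupp.equivFunOnFinite.symm (fun _ : Fin 3 => Fintype.card F - 2) →
      f₃.coeff d = 0) := by
  have heval : ∀ x : Fin 3 → F, eval x f₃ = swapInvAdd (swapInvAdd (x 0) (x 1)) (x 2) :=
    fun x => by
      simp only [heq₃, heq₂, pow_card_sub_two_eq_inv (K := F) (by omega), ht,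
        eval_X_add_sum_range_pow, Matrix.cons_val_zero, Matrix.cons_val_one, swapInvAdd]
  have hperm (i : Fin 3) (x : Fin 3 → F) :
      Function.Bijective fun c => eval (Function.update x i c) f₃ := by
    simpa only [heval] using bijective_update_swapInvAdd_swapInvAdd i x
  have hdeg (i : Fin 3) : f₃.degreeOf i ≤ Fintype.card F - 2 :=
    degreeOf_le_card_sub_two_of_bijective_update (by omega) hred₃ (hperm i)
  have htop : f₃.coeff (Finsupp.equivFunOnFinite.symm fun _ => Fintype.card F - 2) = -4 := by
    rw [coeff_eq_sum_eval_mul_prod_monomialDual hred₃ fun _ => by simp; omega,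
      Fin.sum_univ_three_fun, ← sum_swapInvAdd_swapInvAdd_mul (K := F) (by omega)]
    simp only [← sum_neg_distrib, heval, Fin.prod_univ_three]
    simp [monomialDual_card_sub_two (K := F) (by omega)]
  have hfour : (-4 : F) ≠ 0 := by
    have hchar : ringChar F ≠ 2 := by
      have := Nat.odd_iff.mp ((hp.odd_of_ne_two hodd).pow (n := r))
      rw [Ne, FiniteField.even_card_iff_char_two, hF]
      omega
    rw [neg_ne_zero, show (4 : F) = 2 * 2 by norm_num]
    exact mul_ne_zero (Ring.two_ne_zero hchar) (Ring.two_ne_zero hchar)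
  refine ⟨?_, hperm, htop, fun d hd hne =>
    coeff_eq_zero_of_degreeOf_le hdeg (by simpa using hd) hne⟩
  simpa using totalDegree_eq_card_mul_of_degreeOf_le hdeg (htop ▸ hfour)

/-- For `q = p^r > 3` with `p` an odd prime, `t(x) = x + ∑_{k=0}^{q-2} x^k`, `f₂` the
reduced form of `t(x₁^{q-2} + x₂^{q-2})` and `f₃` the reduced form of
`t(f₂^{q-2} + x₃^{q-2})`, the polynomial `f₃` has total degree `3(q-2)`, is a local
permutation polynomial, and its unique monomial of degree `3(q-2)` is
`-4·x₁^{q-2} x₂^{q-2} x₃^{q-2}`. -/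
theorem lpp_three_vars_max_degree {p r : ℕ} (hp : p.Prime) (hodd : p ≠ 2) (hr : 0 < r)
    {F : Type*} [Field F] [Fintype F] [DecidableEq F]
    (hF : Fintype.card F = p ^ r) (hq : 3 < Fintype.card F)
    (t : Polynomial F)
    (ht : t = Polynomial.X + ∑ k ∈ Finset.range (Fintype.card F - 1), Polynomial.X ^ k)
    (f₂ : MvPolynomial (Fin 2) F)
    (hred₂ : ∀ i : Fin 2, f₂.degreeOf i < Fintype.card F)
    (heq₂ : ∀ x : Fin 2 → F, eval x f₂ =
      Polynomial.eval ((x 0) ^ (Fintype.card F - 2) + (x 1) ^ (Fintype.card F - 2)) t)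
    (f₃ : MvPolynomial (Fin 3) F)
    (hred₃ : ∀ i : Fin 3, f₃.degreeOf i < Fintype.card F)
    (heq₃ : ∀ x : Fin 3 → F, eval x f₃ =
      Polynomial.eval ((eval ![x 0, x 1] f₂) ^ (Fintype.card F - 2)
        + (x 2) ^ (Fintype.card F - 2)) t) :
    f₃.totalDegree = 3 * (Fintype.card F - 2) ∧
    (∀ (i : Fin 3) (x : Fin 3 → F),
      Function.Bijective fun c : F => eval (Function.update x i c) f₃) ∧
    f₃.coeff (Finsupp.equivFunOnFinite.symm fun _ : Fin 3 => Fintype.card F - 2) = -4 ∧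
    (∀ d : Fin 3 →₀ ℕ, (d.sum fun _ e => e) = 3 * (Fintype.card F - 2) →
      d ≠ Finsupp.equivFunOnFinite.symm (fun _ : Fin 3 => Fintype.card F - 2) →
      f₃.coeff d = 0) :=
  lpp_three_vars_max_degree_general hp hodd hF hq t ht f₂ heq₂ f₃ hred₃ heq₃
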